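/- Under strict invariance, for every coroot α and every λ ∈ Λ^♯, the reflection formula restricts to the sharp root datum: s_α(λ) = λ − ⟨α̌^♯,λ⟩·α^♯, where α^♯ = n_α·α and α̌^♯ = α̌/n_α (which takes integer values on Λ^♯). Moreover ⟨α̌^♯, α^♯⟩ = 2. In particular the reflection of Λ^♯ in the 'sharp' root α^♯ coincides with the restriction of s_α to Λ^♯. -/

import Mathlib

theorem comm_of_eq_polar {Λ A : Type*} [AddCommGroup Λ] [AddCommGroup A] {Q : Λ → A}
    {b : Λ → Λ → A} (hb : ∀ l m : Λ, b l m = Q (l + m) - Q l - Q m) (l m : Λ) :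
    b l m = b m l := by
  rw [hb, hb, add_comm l m]
  abel

theorem stmt9_general {Λ A : Type*} [AddCommGroup Λ] [AddCommGroup A]
    (Q : Λ → A)
    (b : Λ → Λ → A)
    (hb : ∀ l m : Λ, b l m = Q (l + m) - Q l - Q m)
    (Φ : Set Λ) (d : Λ → Λ →+ ℤ)
    (hpair : ∀ α ∈ Φ, d α α = 2)
    (hstrict : ∀ α ∈ Φ, ∀ l : Λ, b α l = d α l • Q α) :
    ∀ α ∈ Φ,
      (∀ l : Λ, (∀ μ : Λ, b l μ = 0) →
        ∃ k : ℤ, d α l = (addOrderOf (Q α) : ℤ) * k ∧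
          l - d α l • α = l - k • ((addOrderOf (Q α) : ℤ) • α)) ∧
      d α ((addOrderOf (Q α) : ℤ) • α) = 2 * (addOrderOf (Q α) : ℤ) := by
  intro α hα
  refine ⟨fun l hl => ?_, by rw [map_zsmul, hpair α hα, smul_eq_mul, mul_comm]⟩
  obtain ⟨k, hk⟩ : (addOrderOf (Q α) : ℤ) ∣ d α l :=
    addOrderOf_dvd_iff_zsmul_eq_zero.mpr (by rw [← hstrict α hα l, comm_of_eq_polar hb, hl])
  exact ⟨k, hk, by rw [hk, mul_comm, mul_zsmul]⟩

/-- Under strict invariance, for every coroot `α` and every `λ ∈ Λ^♯`, the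
reflection formula restricts to the sharp root datum: `s_α(λ) = λ − ⟨α̌^♯,λ⟩ • α^♯`, where
`α^♯ = n_α • α` and `⟨α̌^♯,λ⟩ = ⟨α̌,λ⟩ / n_α` is an integer.  Moreover
`⟨α̌^♯, α^♯⟩ = 2` (equivalently `⟨α̌, n_α • α⟩ = 2 n_α`). -/
theorem stmt9 {Λ A : Type*} [AddCommGroup Λ] [AddCommGroup A] [Finite A]
    [Module.Free ℤ Λ] [Module.Finite ℤ Λ]
    (Q : Λ → A)
    (hQ : ∀ (n : ℤ) (l : Λ), Q (n • l) = n ^ 2 • Q l)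
    (b : Λ → Λ → A)
    (hb : ∀ l m : Λ, b l m = Q (l + m) - Q l - Q m)
    (hbadd : ∀ l₁ l₂ m : Λ, b (l₁ + l₂) m = b l₁ m + b l₂ m)
    (hbadd' : ∀ l m₁ m₂ : Λ, b l (m₁ + m₂) = b l m₁ + b l m₂)
    (Φ : Set Λ) (d : Λ → Λ →+ ℤ)
    (hpair : ∀ α ∈ Φ, d α α = 2)
    (hstrict : ∀ α ∈ Φ, ∀ l : Λ, b α l = d α l • Q α) :
    ∀ α ∈ Φ,
      (∀ l : Λ, (∀ μ : Λ, b l μ = 0) →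
        ∃ k : ℤ, d α l = (addOrderOf (Q α) : ℤ) * k ∧
          l - d α l • α = l - k • ((addOrderOf (Q α) : ℤ) • α)) ∧
      d α ((addOrderOf (Q α) : ℤ) • α) = 2 * (addOrderOf (Q α) : ℤ) :=
  stmt9_general Q b hb Φ d hpair hstrict
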